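/- Let b ∈ ℂ and let T be the 2×2 complex matrix with rows (1, b) and (0, −1), acting on ℓ_p². Then the numerical range V_p(T), viewed as a subset of ℂ ≅ ℝ², is a convex set. -/

import Mathlib

open Complex Real

/-- The `ℓ_p` norm on `ℂ²`. -/
noncomputable def lpNorm (p : ℝ) (x : Fin 2 → ℂ) : ℝ :=
  (∑ k, ‖x k‖ ^ p) ^ (1 / p)

/-- The numerical range of a `2 × 2` complex matrix acting on `ℓ_p²`.
Note that when `x k = 0` the corresponding term vanishes since `conj (x k) = 0`. -/
noncomputable def numRange (p : ℝ) (T : Matrix (Fin 2) (Fin 2) ℂ) : Set ℂ :=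
  { z | ∃ x : Fin 2 → ℂ, lpNorm p x = 1 ∧
      z = ∑ k, T.mulVec x k * (starRingEnd ℂ) (x k) * ((‖x k‖ ^ (p - 2) : ℝ) : ℂ) }

/-- The numerical radius of a `2 × 2` complex matrix acting on `ℓ_p²`. -/
noncomputable def numRadius (p : ℝ) (T : Matrix (Fin 2) (Fin 2) ℂ) : ℝ :=
  sSup ((fun z : ℂ => ‖z‖) '' numRange p T)

/-!
For `‖x‖_p = 1` put `t = |x₁|^p ∈ [0, 1]` (the coordinates `x₁, x₂` are `x 0, x 1` below).
The numerical-range functional of `T` at `x` is `(2t - 1) + b x₂ x̄₁ |x₁|^(p-2)`, and the second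
term has modulus `r(t) = |b| t^(1-1/p) (1-t)^(1/p)` and, as the phase of `x₂` varies, every
argument. So `V_p(T)` is the union over `t ∈ [0, 1]` of the circles with centre `2t - 1` and
radius `r(t)`. As `r(0) = 0`, the intermediate value theorem fills each circle into its disc; and
as `r` is concave (Hölder) while the centre is affine in `t`, this union of discs is convex.
-/

open Set Metric ComplexConjugate

theorem Real.rpow_mul_rpow_superadditive {a b : ℝ} (ha : 0 < a) (hb : 0 < b) (hab : a + b = 1)
    {x₁ y₁ x₂ y₂ : ℝ} (hx₁ : 0 ≤ x₁) (hy₁ : 0 ≤ y₁) (hx₂ : 0 ≤ x₂) (hy₂ : 0 ≤ y₂) :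
    x₁ ^ a * y₁ ^ b + x₂ ^ a * y₂ ^ b ≤ (x₁ + x₂) ^ a * (y₁ + y₂) ^ b := by
  have := inner_le_Lp_mul_Lq_of_nonneg Finset.univ (Real.HolderConjugate.inv_inv ha hb hab)
    (f := ![x₁ ^ a, x₂ ^ a]) (g := ![y₁ ^ b, y₂ ^ b])
    (by intro i _; fin_cases i <;> simp <;> positivity)
    (by intro i _; fin_cases i <;> simp <;> positivity)
  simpa [Fin.sum_univ_two, ← Real.rpow_mul, hx₁, hx₂, hy₁, hy₂, ha.ne', hb.ne'] using this

theorem concaveOn_rpow_mul_one_sub_rpow {a b : ℝ} (ha : 0 < a) (hb : 0 < b) (hab : a + b = 1) :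
    ConcaveOn ℝ (Icc 0 1) fun t : ℝ ↦ t ^ a * (1 - t) ^ b := by
  refine ⟨convex_Icc 0 1, ?_⟩
  rintro t₁ ⟨ht₁, ht₁'⟩ t₂ ⟨ht₂, ht₂'⟩ μ₁ μ₂ hμ₁ hμ₂ hμ
  have homog : ∀ μ t : ℝ, 0 ≤ μ → 0 ≤ t → t ≤ 1 →
      μ • (t ^ a * (1 - t) ^ b) = (μ * t) ^ a * (μ * (1 - t)) ^ b := by
    intro μ t hμ ht ht'
    rw [Real.mul_rpow hμ ht, Real.mul_rpow hμ (by linarith), smul_eq_mul]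
    calc μ * (t ^ a * (1 - t) ^ b) = μ ^ (a + b) * (t ^ a * (1 - t) ^ b) := by
          rw [hab, Real.rpow_one]
      _ = _ := by rw [Real.rpow_add' hμ (by linarith)]; ring
  rw [homog μ₁ t₁ hμ₁ ht₁ ht₁', homog μ₂ t₂ hμ₂ ht₂ ht₂']
  have hsum : μ₁ * (1 - t₁) + μ₂ * (1 - t₂) = 1 - (μ₁ • t₁ + μ₂ • t₂) := by
    simp only [smul_eq_mul]; linear_combination hμ
  simpa only [smul_eq_mul, hsum] using
    Real.rpow_mul_rpow_superadditive ha hb hab (mul_nonneg hμ₁ ht₁)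
      (mul_nonneg hμ₁ (sub_nonneg.2 ht₁')) (mul_nonneg hμ₂ ht₂) (mul_nonneg hμ₂ (sub_nonneg.2 ht₂'))

theorem convex_biUnion_closedBall_of_concaveOn {F E : Type*} [AddCommGroup F] [Module ℝ F]
    [SeminormedAddCommGroup E] [NormedSpace ℝ E] {s : Set F} {r : F → ℝ}
    (hr : ConcaveOn ℝ s r) (c : F →ᵃ[ℝ] E) :
    Convex ℝ (⋃ t ∈ s, closedBall (c t) (r t)) := by
  simp only [Convex, StarConvex, mem_iUnion₂, mem_closedBall, dist_eq_norm]
  rintro z₁ ⟨t₁, ht₁, hz₁⟩ z₂ ⟨t₂, ht₂, hz₂⟩ μ₁ μ₂ hμ₁ hμ₂ hμ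
  refine ⟨μ₁ • t₁ + μ₂ • t₂, hr.1 ht₁ ht₂ hμ₁ hμ₂ hμ, ?_⟩
  calc ‖μ₁ • z₁ + μ₂ • z₂ - c (μ₁ • t₁ + μ₂ • t₂)‖
      = ‖μ₁ • (z₁ - c t₁) + μ₂ • (z₂ - c t₂)‖ := by
        rw [Convex.combo_affine_apply hμ, smul_sub, smul_sub]
        abel_nf
    _ ≤ μ₁ * ‖z₁ - c t₁‖ + μ₂ * ‖z₂ - c t₂‖ := by
      refine (norm_add_le _ _).trans_eq ?_
      rw [norm_smul_of_nonneg hμ₁, norm_smul_of_nonneg hμ₂]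
    _ ≤ μ₁ • r t₁ + μ₂ • r t₂ := by simp only [smul_eq_mul]; gcongr
    _ ≤ r (μ₁ • t₁ + μ₂ • t₂) := hr.2 ht₁ ht₂ hμ₁ hμ₂ hμ

theorem biUnion_Icc_sphere_eq_biUnion_Icc_closedBall {E : Type*} [SeminormedAddCommGroup E]
    {c : ℝ → E} {r : ℝ → ℝ} {a b : ℝ} (hc : ContinuousOn c (Icc a b))
    (hr : ContinuousOn r (Icc a b)) (hra : r a ≤ 0) :
    ⋃ t ∈ Icc a b, sphere (c t) (r t) = ⋃ t ∈ Icc a b, closedBall (c t) (r t) := by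
  refine (biUnion_mono subset_rfl fun t _ ↦ sphere_subset_closedBall).antisymm ?_
  simp only [subset_def, mem_iUnion₂, mem_closedBall, mem_sphere]
  rintro z ⟨t, ⟨hat, htb⟩, hz⟩
  have hIcc : Icc a t ⊆ Icc a b := Icc_subset_Icc_right htb
  have hg : ContinuousOn (fun s ↦ dist z (c s) - r s) (Icc a t) :=
    ((continuous_const.dist continuous_id).comp_continuousOn (hc.mono hIcc)).sub (hr.mono hIcc)
  obtain ⟨s, hs, hs0⟩ := intermediate_value_Icc' hat hg
    ⟨sub_nonpos.2 hz, sub_nonneg.2 (hra.trans dist_nonneg)⟩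
  exact ⟨s, hIcc hs, sub_eq_zero.1 hs0⟩

theorem Complex.exists_norm_eq_and_mul_eq {b w : ℂ} {r : ℝ} (hr : 0 ≤ r) (h : ‖w‖ = ‖b‖ * r) :
    ∃ u : ℂ, ‖u‖ = r ∧ b * u = w := by
  rcases eq_or_ne b 0 with rfl | hb
  · exact ⟨r, by simp [hr], by simpa [eq_comm] using h⟩
  · refine ⟨w / b, ?_, mul_div_cancel₀ w hb⟩
    rw [norm_div, h, mul_div_cancel_left₀ r (norm_ne_zero_iff.2 hb)]

theorem Real.rpow_rpow_one_sub_inv {p u : ℝ} (hp : p ≠ 0) (hu : 0 ≤ u) :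
    (u ^ p) ^ (1 - p⁻¹) = u ^ (p - 1) := by
  rw [← Real.rpow_mul hu]
  congr 1
  field_simp

theorem Complex.mul_conj_mul_rpow_sub_two {p : ℝ} (hp : p ≠ 0) (z : ℂ) :
    z * conj z * ((‖z‖ ^ (p - 2) : ℝ) : ℂ) = ((‖z‖ ^ p : ℝ) : ℂ) := by
  have h : ‖z‖ ^ (2 : ℝ) * ‖z‖ ^ (p - 2) = ‖z‖ ^ p := by
    rw [← Real.rpow_add' (norm_nonneg z) (by simpa using hp), add_sub_cancel]
  rw [mul_conj, normSq_eq_norm_sq, ← h, Real.rpow_two]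
  push_cast
  ring

theorem lpNorm_eq_one_iff {p : ℝ} (hp : p ≠ 0) (x : Fin 2 → ℂ) :
    lpNorm p x = 1 ↔ ‖x 0‖ ^ p + ‖x 1‖ ^ p = 1 := by
  rw [lpNorm, Fin.sum_univ_two, one_div, Real.rpow_inv_eq (by positivity) zero_le_one hp,
    Real.one_rpow]

theorem sum_mulVec_mul_conj_mul_rpow {p : ℝ} (hp : p ≠ 0) (b : ℂ) (x : Fin 2 → ℂ) :
    ∑ k, (!![1, b; 0, -1] : Matrix (Fin 2) (Fin 2) ℂ).mulVec x k * conj (x k) *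
        ((‖x k‖ ^ (p - 2) : ℝ) : ℂ) =
      ((‖x 0‖ ^ p - ‖x 1‖ ^ p : ℝ) : ℂ) +
        b * x 1 * conj (x 0) * ((‖x 0‖ ^ (p - 2) : ℝ) : ℂ) := by
  simp only [Fin.sum_univ_two, Matrix.mulVec, dotProduct, Matrix.of_apply, Matrix.cons_val',
    Matrix.cons_val_zero, Matrix.cons_val_one, Matrix.empty_val', Matrix.cons_val_fin_one]
  push_cast
  linear_combination mul_conj_mul_rpow_sub_two hp (x 0) - mul_conj_mul_rpow_sub_two hp (x 1)

theorem lineMap_neg_one_one (t : ℝ) : AffineMap.lineMap (-1 : ℂ) 1 t = ((2 * t - 1 : ℝ) : ℂ) := by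
  rw [AffineMap.lineMap_apply_module, real_smul, real_smul]
  push_cast
  ring

theorem numRange_subset_biUnion_sphere {p : ℝ} (hp : 1 < p) (b : ℂ) :
    numRange p !![1, b; 0, -1] ⊆
      ⋃ t ∈ Icc (0 : ℝ) 1, sphere (AffineMap.lineMap (-1 : ℂ) 1 t)
        (‖b‖ * (t ^ (1 - p⁻¹) * (1 - t) ^ p⁻¹)) := by
  have hp0 : p ≠ 0 := by positivity
  rintro z ⟨x, hx, rfl⟩
  rw [lpNorm_eq_one_iff hp0] at hx
  have hx0 : 0 ≤ ‖x 0‖ ^ p := by positivity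
  have hx1 : 0 ≤ ‖x 1‖ ^ p := by positivity
  refine mem_biUnion (x := ‖x 0‖ ^ p) ⟨hx0, by linarith⟩ ?_
  have hnorm1 : ‖x 1‖ = (1 - ‖x 0‖ ^ p) ^ p⁻¹ := by
    rw [← hx, add_sub_cancel_left, Real.rpow_rpow_inv (norm_nonneg _) hp0]
  have hcross : ‖x 0‖ * ‖x 0‖ ^ (p - 2) = (‖x 0‖ ^ p) ^ (1 - p⁻¹) := by
    rw [Real.rpow_rpow_one_sub_inv hp0 (norm_nonneg _), ← Real.rpow_one_add' (norm_nonneg _)]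
    · ring_nf
    · linarith
  rw [mem_sphere, dist_eq_norm, sum_mulVec_mul_conj_mul_rpow hp0, lineMap_neg_one_one,
    ← sub_eq_of_eq_add' hx.symm]
  push_cast
  rw [show ∀ s w : ℂ, s - (1 - s) + w - (2 * s - 1) = w from fun s w ↦ by ring,
    norm_mul, norm_mul, norm_mul, norm_conj, norm_real, Real.norm_of_nonneg (by positivity),
    hnorm1, ← hcross]
  ring

theorem biUnion_sphere_subset_numRange {p : ℝ} (hp : 1 < p) (b : ℂ) :
    ⋃ t ∈ Icc (0 : ℝ) 1, sphere (AffineMap.lineMap (-1 : ℂ) 1 t)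
        (‖b‖ * (t ^ (1 - p⁻¹) * (1 - t) ^ p⁻¹)) ⊆ numRange p !![1, b; 0, -1] := by
  have hp0 : p ≠ 0 := by positivity
  simp only [subset_def, mem_iUnion₂, mem_sphere, dist_eq_norm, lineMap_neg_one_one]
  rintro z ⟨t, ⟨ht0, ht1⟩, hz⟩
  set u := t ^ p⁻¹
  have hu : 0 ≤ u := by positivity
  have hup : u ^ p = t := Real.rpow_inv_rpow ht0 hp0
  have hcross : u * u ^ (p - 2) = t ^ (1 - p⁻¹) := by
    rw [← hup, Real.rpow_rpow_one_sub_inv hp0 hu, ← Real.rpow_one_add' hu]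
    · ring_nf
    · linarith
  obtain ⟨v, hv, hbv⟩ := exists_norm_eq_and_mul_eq (b := b * (t ^ (1 - p⁻¹) : ℝ))
    (r := (1 - t) ^ p⁻¹) (by positivity) (by
      rw [hz, norm_mul, norm_real, Real.norm_of_nonneg (by positivity)]; ring)
  refine ⟨![(u : ℂ), v], ?_, ?_⟩
  · rw [lpNorm_eq_one_iff hp0]
    simp [norm_real, Real.norm_of_nonneg hu, hup, hv, Real.rpow_inv_rpow (sub_nonneg.2 ht1) hp0]
  · rw [sum_mulVec_mul_conj_mul_rpow hp0]
    simp only [Matrix.cons_val_zero, Matrix.cons_val_one, norm_real,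
      Real.norm_of_nonneg hu, conj_ofReal, hup, hv, Real.rpow_inv_rpow (sub_nonneg.2 ht1) hp0]
    rw [← hcross] at hbv
    push_cast at hbv ⊢
    linear_combination -hbv

theorem numRange_eq_biUnion_sphere {p : ℝ} (hp : 1 < p) (b : ℂ) :
    numRange p !![1, b; 0, -1] =
      ⋃ t ∈ Icc (0 : ℝ) 1, sphere (AffineMap.lineMap (-1 : ℂ) 1 t)
        (‖b‖ * (t ^ (1 - p⁻¹) * (1 - t) ^ p⁻¹)) :=
  (numRange_subset_biUnion_sphere hp b).antisymm (biUnion_sphere_subset_numRange hp b)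

theorem numRange_convex (p : ℝ) (hp : 1 < p) (b : ℂ) :
    Convex ℝ (numRange p !![1, b; 0, -1]) := by
  have ha : 0 < 1 - p⁻¹ := sub_pos.2 (inv_lt_one_of_one_lt₀ hp)
  have hb : 0 < p⁻¹ := by positivity
  have hr : Continuous fun t : ℝ ↦ ‖b‖ * (t ^ (1 - p⁻¹) * (1 - t) ^ p⁻¹) := by
    fun_prop (disch := simp [ha.le, hb.le])
  rw [numRange_eq_biUnion_sphere hp b, biUnion_Icc_sphere_eq_biUnion_Icc_closedBall
    (AffineMap.lineMap_continuous.continuousOn) hr.continuousOn (by simp [zero_rpow ha.ne'])]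
  exact convex_biUnion_closedBall_of_concaveOn
    ((concaveOn_rpow_mul_one_sub_rpow ha hb (sub_add_cancel 1 p⁻¹)).smul (norm_nonneg b)) _
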